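/- For every n ≥ 3, every finite 2-connected graph containing a path of length n² also contains a cycle of length at least n. -/

import Mathlib

/-!
Suppose every cycle has length `< n`. Two estimates then contradict each other.

If all cycles are shorter than `k`, a path `P` from `u` to `v` has length at most
`(k - 2) · dist u v`: the first edge of `P`, followed along `P` up to the first vertex `x`
lying on a shortest `u`–`v` path `Q`, closes up with `Q` from `u` to `x` into a cycle, so this
piece of `P` is at most `(k - 2)` times `dist u x`; induct on the rest of `P`.

In a 2-connected graph any two vertices lie on a common cycle (Whitney), hence
`2 · dist u v < n`. This is proved along a walk `u = u₀, u₁, …, v`: given a cycle through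
`u₁` and `v` missing `u`, a `u`–`v` path avoiding `u₁` first meets the cycle at some `x ≠ u₁`,
and one of the two arcs of the cycle between `x` and `u₁` contains `v`; that arc, the path, and
the edge `u₁u` form the new cycle.

For the endpoints of a path of length `n²` this gives `n² ≤ (n - 2)(n - 1) / 2`.
-/

open SimpleGraph

/-- `G` contains a path with `n` edges. -/
def HasPathLen {V : Type*} (G : SimpleGraph V) (n : ℕ) : Prop :=
  ∃ (u v : V) (p : G.Walk u v), p.IsPath ∧ p.length = n

namespace SimpleGraph

variable {V : Type*} {G : SimpleGraph V}

namespace Walk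

variable {u v w x y : V}

lemma IsPath.ne_of_mem_support_tail {p : G.Walk u v} (hp : p.IsPath) (hy : y ∈ p.support.tail) :
    y ≠ u := by
  rintro rfl
  have := hp.support_nodup
  rw [← cons_tail_support] at this
  exact (List.nodup_cons.mp this).1 hy

lemma IsPath.append {p : G.Walk u v} {q : G.Walk v w} (hp : p.IsPath) (hq : q.IsPath)
    (hpq : ∀ y ∈ p.support, y ∈ q.support → y = v) : (p.append q).IsPath := by
  rw [isPath_def, support_append]
  refine hp.support_nodup.append hq.support_nodup.tail fun y hyp hyq ↦ ?_
  exact hq.ne_of_mem_support_tail hyq (hpq y hyp (List.mem_of_mem_tail hyq))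

lemma IsPath.isCycle_cons {p : G.Walk v u} (hp : p.IsPath) (h : G.Adj u v)
    (hlen : 2 ≤ p.length) : (cons h p).IsCycle := by
  refine (cons_isCycle_iff p h).mpr ⟨hp, fun he ↦ ?_⟩
  rw [Sym2.eq_swap] at he
  have := hp.length_eq_one_of_mem_edges he
  omega

lemma IsPath.isCycle_append_reverse {p q : G.Walk u v} (hp : p.IsPath) (hq : q.IsPath)
    (hpq : ∀ y ∈ p.support, y ∈ q.support → y = u ∨ y = v) (hlen : 3 ≤ p.length + q.length) :
    (p.append q.reverse).IsCycle := by
  refine hp.isCycle_append hq.reverse (List.disjoint_left.mpr fun y hyp hyq ↦ ?_) (by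
    rw [length_reverse]; omega)
  have hyq' : y ∈ q.support := by
    simpa using List.mem_of_mem_tail hyq
  rcases hpq y (List.mem_of_mem_tail hyp) hyq' with rfl | rfl
  · exact hp.ne_of_mem_support_tail hyp rfl
  · exact hq.reverse.ne_of_mem_support_tail hyq rfl

lemma exists_eq_append_first_mem (p : G.Walk u v) {S : Set V} (hv : v ∈ S) :
    ∃ (x : V) (p₁ : G.Walk u x) (p₂ : G.Walk x v),
      p = p₁.append p₂ ∧ x ∈ S ∧ ∀ y ∈ p₁.support, y ∈ S → y = x := by
  induction p with
  | nil => exact ⟨_, nil, nil, rfl, hv, by simp⟩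
  | @cons u _ _ h q ih =>
    by_cases hu : u ∈ S
    · exact ⟨u, nil, cons h q, rfl, hu, by simp⟩
    · obtain ⟨x, q₁, q₂, rfl, hx, hfirst⟩ := ih hv
      refine ⟨x, cons h q₁, q₂, rfl, hx, fun y hy hyS ↦ ?_⟩
      rcases List.mem_cons.mp hy with rfl | hy
      · exact absurd hyS hu
      · exact hfirst y hy hyS

lemma two_mul_dist_le_length_of_mem_support {c : G.Walk w w} (hu : u ∈ c.support)
    (hv : v ∈ c.support) : 2 * G.dist u v ≤ c.length := by
  classical
  have hv' : v ∈ (c.rotate u hu).support := (mem_support_rotate_iff ..).mpr hv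
  have hsplit := congrArg length ((c.rotate u hu).take_spec hv')
  rw [length_append, length_rotate] at hsplit
  have h₁ := dist_le ((c.rotate u hu).takeUntil v hv')
  have h₂ := dist_le ((c.rotate u hu).dropUntil v hv')
  rw [dist_comm] at h₂
  omega

variable {k : ℕ}

lemma IsPath.length_add_length_lt {p q : G.Walk u v} (hp : p.IsPath) (hq : q.IsPath)
    (hpq : ∀ y ∈ p.support, y ∈ q.support → y = u ∨ y = v) (hk : 3 ≤ k)
    (hcyc : ∀ (z : V) (c : G.Walk z z), c.IsCycle → c.length < k) :
    p.length + q.length < k := by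
  by_cases hlen : 3 ≤ p.length + q.length
  · simpa using hcyc u _ (hp.isCycle_append_reverse hq hpq hlen)
  · omega

theorem IsPath.length_le_mul_dist (hk : 3 ≤ k)
    (hcyc : ∀ (z : V) (c : G.Walk z z), c.IsCycle → c.length < k) {P : G.Walk u v}
    (hP : P.IsPath) : P.length ≤ (k - 2) * G.dist u v := by
  classical
  induction hn : P.length using Nat.strong_induction_on generalizing u P with
  | _ n ih =>
  cases P with
  | nil => simp [← hn]
  | @cons _ u' _ h P' =>
    obtain ⟨Q, hQ, hQlen⟩ := (cons h P').reachable.exists_path_of_dist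
    obtain ⟨x, P₁, P₂, rfl, hxQ, hfirst⟩ :=
      P'.exists_eq_append_first_mem (S := {y | y ∈ Q.support}) Q.end_mem_support
    have huP : u ∉ (P₁.append P₂).support := ((cons_isPath_iff h _).mp hP).2
    have hux : u ≠ x := by
      rintro rfl
      exact huP ((mem_support_append_iff _ _).mpr (Or.inl P₁.end_mem_support))
    have hcycle : (cons h P₁).length + (Q.takeUntil x hxQ).length < k := by
      refine IsPath.length_add_length_lt (hP.of_append_left (q := P₂)) (hQ.takeUntil hxQ)
        (fun y hy hyQ ↦ ?_) hk hcyc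
      rcases List.mem_cons.mp hy with rfl | hy
      · exact Or.inl rfl
      · exact Or.inr (hfirst y hy (Q.support_takeUntil_subset_support hxQ hyQ))
    have hQ₁ : 0 < (Q.takeUntil x hxQ).length :=
      not_nil_iff_lt_length.mp (not_nil_of_ne hux)
    have hQsplit := congrArg length (Q.take_spec hxQ)
    have hP₂ := ih P₂.length (by rw [← hn]; simp) (hP.of_append_right (p := cons h P₁)) rfl
    have hdist := dist_le (Q.dropUntil x hxQ)
    rw [length_append] at hQsplit
    rw [length_cons] at hcycle
    simp only [length_cons, length_append] at hn
    obtain ⟨m, rfl⟩ : ∃ m, k = m + 2 := ⟨k - 2, by omega⟩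
    simp only [Nat.add_sub_cancel] at hP₂ ⊢
    nlinarith [Nat.mul_le_mul_left m hdist, Nat.le_mul_of_pos_right m hQ₁]

end Walk

variable {u v w : V}

lemma exists_isPath_notMem_support (hw : (G.induce ({w}ᶜ : Set V)).Preconnected)
    {a b : V} (ha : a ≠ w) (hb : b ≠ w) : ∃ p : G.Walk a b, p.IsPath ∧ w ∉ p.support := by
  classical
  obtain ⟨q⟩ := hw ⟨a, ha⟩ ⟨b, hb⟩
  let p := q.map (Embedding.induce ({w}ᶜ : Set V)).toHom
  refine ⟨p.bypass, p.bypass_isPath, fun hwp ↦ ?_⟩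
  have hwp' := p.support_bypass_subset_support hwp
  rw [Walk.support_map] at hwp'
  obtain ⟨y, -, hy⟩ := List.mem_map.mp hwp'
  exact y.2 hy

lemma exists_isCycle_of_adj_of_isPath {z : V} {c : G.Walk z z} (hc : c.IsCycle)
    (hw : w ∈ c.support) (hv : v ∈ c.support) (hu : u ∉ c.support) (hwu : G.Adj w u)
    {R : G.Walk u v} (hR : R.IsPath) (hwR : w ∉ R.support) :
    ∃ (z' : V) (c' : G.Walk z' z'), c'.IsCycle ∧ u ∈ c'.support ∧ v ∈ c'.support := by
  classical
  obtain ⟨x, R₁, R₂, rfl, hxc, hfirst⟩ :=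
    R.exists_eq_append_first_mem (S := {y | y ∈ c.support}) hv
  have hR₁ : R₁.IsPath := hR.of_append_left
  have hxw : x ≠ w := by
    rintro rfl
    exact hwR ((Walk.mem_support_append_iff _ _).mpr (Or.inl R₁.end_mem_support))
  have hux : u ≠ x := by
    rintro rfl
    exact hu hxc
  have hclose : ∀ γ : G.Walk x w, γ.IsPath → (∀ y ∈ γ.support, y ∈ c.support) →
      v ∈ γ.support →
      ∃ (z' : V) (c' : G.Walk z' z'), c'.IsCycle ∧ u ∈ c'.support ∧ v ∈ c'.support := by
    intro γ hγ hγc hvγ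
    refine ⟨w, .cons hwu (R₁.append γ), ?_, by simp, by simp [hvγ]⟩
    refine (hR₁.append hγ fun y hy hyγ ↦ hfirst y hy (hγc y hyγ)).isCycle_cons hwu ?_
    have := Walk.not_nil_iff_lt_length.mp (Walk.not_nil_of_ne (p := R₁) hux)
    have := Walk.not_nil_iff_lt_length.mp (Walk.not_nil_of_ne (p := γ) hxw)
    rw [Walk.length_append]
    omega
  set c' := c.rotate w hw
  have hc'c : ∀ y ∈ c'.support, y ∈ c.support := fun y ↦ (Walk.mem_support_rotate_iff ..).mp
  have hxc' : x ∈ c'.support := (Walk.mem_support_rotate_iff ..).mpr hxc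
  have hspec := c'.take_spec hxc'
  have hcyc : ((c'.takeUntil x hxc').append (c'.dropUntil x hxc')).IsCycle := by
    rw [hspec]; exact hc.rotate hw
  have hv' : v ∈ (c'.takeUntil x hxc').support ∨ v ∈ (c'.dropUntil x hxc').support := by
    rw [← Walk.mem_support_append_iff, hspec]
    exact (Walk.mem_support_rotate_iff ..).mpr hv
  rcases hv' with hvα | hvβ
  · exact hclose _ (hcyc.isPath_of_append_left (Walk.not_nil_of_ne hxw)).reverse
      (fun y hy ↦ hc'c y (c'.support_takeUntil_subset_support hxc' (by simpa using hy)))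
      (by simpa using hvα)
  · exact hclose _ (hcyc.isPath_of_append_right (Walk.not_nil_of_ne hxw.symm))
      (fun y hy ↦ hc'c y (c'.support_dropUntil_subset_support hxc' hy)) hvβ

lemma exists_isCycle_of_adj (h3 : 3 ≤ ENat.card V)
    (h2conn : ∀ v : V, (G.induce ({v}ᶜ : Set V)).Connected) (h : G.Adj u v) :
    ∃ (z : V) (c : G.Walk z z), c.IsCycle ∧ u ∈ c.support ∧ v ∈ c.support := by
  obtain ⟨z, hzu, hzv⟩ := ENat.exists_ne_ne_of_three_le h3 u v
  obtain ⟨P, -, huP⟩ := exists_isPath_notMem_support (h2conn u).preconnected h.ne' hzu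
  cases P with
  | nil => exact absurd rfl hzv
  | @cons _ w _ hvw P' =>
    have hwu : w ≠ u := by
      rintro rfl
      exact huP (by simp)
    obtain ⟨R, hR, hvR⟩ := exists_isPath_notMem_support (h2conn v).preconnected h.ne hvw.ne'
    refine ⟨v, .cons h.symm (R.concat hvw.symm), ?_, by simp, by simp⟩
    refine (hR.concat hvR hvw.symm).isCycle_cons h.symm ?_
    have := Walk.not_nil_iff_lt_length.mp (Walk.not_nil_of_ne (p := R) hwu.symm)
    rw [Walk.length_concat]
    omega

theorem exists_isCycle_mem_support_of_ne (h3 : 3 ≤ ENat.card V)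
    (h2conn : ∀ v : V, (G.induce ({v}ᶜ : Set V)).Connected) (huv : u ≠ v) :
    ∃ (z : V) (c : G.Walk z z), c.IsCycle ∧ u ∈ c.support ∧ v ∈ c.support := by
  have hreach : G.Reachable u v := by
    obtain ⟨z, hzu, hzv⟩ := ENat.exists_ne_ne_of_three_le h3 u v
    obtain ⟨Q, -, -⟩ := exists_isPath_notMem_support (h2conn z).preconnected hzu.symm hzv.symm
    exact Q.reachable
  obtain ⟨Q⟩ := hreach
  induction Q with
  | nil => exact absurd rfl huv
  | @cons u u' v h Q ih =>
    by_cases hu'v : u' = v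
    · subst hu'v
      exact exists_isCycle_of_adj h3 h2conn h
    obtain ⟨z, c, hc, hu'c, hvc⟩ := ih hu'v
    by_cases huc : u ∈ c.support
    · exact ⟨z, c, hc, huc, hvc⟩
    obtain ⟨R, hR, hu'R⟩ :=
      exists_isPath_notMem_support (h2conn u').preconnected h.ne (Ne.symm hu'v)
    exact exists_isCycle_of_adj_of_isPath hc hu'c hvc huc h.symm hR hu'R

end SimpleGraph

/-- For every `n ≥ 3`, every finite 2-connected graph containing a path of length `n²`
also contains a cycle of length at least `n`. -/
theorem stmt_1 {V : Type*} [Fintype V] (G : SimpleGraph V) (n : ℕ) (hn : 3 ≤ n)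
    (hcard : 3 ≤ Fintype.card V)
    (h2conn : ∀ v : V, (G.induce ({v}ᶜ : Set V)).Connected)
    (hpath : HasPathLen G (n ^ 2)) :
    ∃ (u : V) (c : G.Walk u u), c.IsCycle ∧ n ≤ c.length := by
  by_contra! hcyc
  obtain ⟨u, v, P, hP, hPlen⟩ := hpath
  have huv : u ≠ v := by
    rintro rfl
    rw [(Walk.isPath_iff_nil.mp hP).length_eq_zero] at hPlen
    nlinarith
  have h3 : 3 ≤ ENat.card V := by simpa [ENat.card_eq_coe_fintype_card] using hcard
  obtain ⟨z, c, hc, hu, hv⟩ := exists_isCycle_mem_support_of_ne h3 h2conn huv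
  have hdist := Walk.two_mul_dist_le_length_of_mem_support hu hv
  have hlen := hP.length_le_mul_dist hn hcyc
  have hclen := hcyc z c hc
  rw [hPlen] at hlen
  nlinarith [Nat.mul_le_mul_right (G.dist u v) (Nat.sub_le n 2)]
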